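/- The derivative of the weighted variance along solutions satisfies (d/dt) ∑_i v_i (y_i - m)² = -∑_{i,j} v_i σ_{ij} (y_i - y_j)², where m = ∑_i v_i y_i is constant in time. -/

import Mathlib

/-!
Writing `A` in difference form, `(A x)ᵢ = ∑ⱼ σᵢⱼ (xⱼ - xᵢ)`, the derivative of the variance is
`∑ᵢ vᵢ · 2 (yᵢ - m) (A y)ᵢ`, and pointwise
`2 (xᵢ - c) (xⱼ - xᵢ) = ((xⱼ - c)² - (xᵢ - c)²) - (xᵢ - xⱼ)²`.
Since `Aᵀ v = 0`, every `v`-weighted sum `∑ᵢ vᵢ (A w)ᵢ` vanishes; applied to `w = (x - c)²` this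
kills the first term, and applied to `w = y` it shows that the mean `m` is conserved.
-/

open Matrix Finset

section Generator

variable {n R : Type*} [Fintype n] [CommRing R]

theorem mulVec_apply_eq_sum_mul_sub [DecidableEq n] {σ A : Matrix n n R}
    (hoff : ∀ i j, i ≠ j → A i j = σ i j)
    (hdiag : ∀ i, A i i = -∑ k ∈ univ.filter (fun k => k ≠ i), σ i k) (x : n → R) (i : n) :
    (A *ᵥ x) i = ∑ j, σ i j * (x j - x i) := by
  have hsum : ∑ j ∈ univ.erase i, A i j * x j = ∑ j ∈ univ.erase i, σ i j * x j :=
    sum_congr rfl fun j hj => by rw [hoff i j (ne_of_mem_erase hj).symm]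
  rw [mulVec, dotProduct, ← add_sum_erase _ _ (mem_univ i), hsum, hdiag, filter_ne',
    ← add_sum_erase _ _ (mem_univ i), sub_self, mul_zero, zero_add, neg_mul, sum_mul,
    ← sum_neg_distrib, ← sum_add_distrib]
  exact sum_congr rfl fun j _ => by ring

theorem dotProduct_mulVec_eq_zero_of_transpose_mulVec {A : Matrix n n R} {v : n → R}
    (hv : Aᵀ *ᵥ v = 0) (x : n → R) : v ⬝ᵥ (A *ᵥ x) = 0 := by
  rw [dotProduct_mulVec, ← mulVec_transpose, hv, zero_dotProduct]

theorem two_mul_sub_mul_sum_mul_sub (s x : n → R) (c : R) (i : n) :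
    2 * (x i - c) * ∑ j, s j * (x j - x i) =
      ∑ j, s j * ((x j - c) ^ 2 - (x i - c) ^ 2) - ∑ j, s j * (x i - x j) ^ 2 := by
  rw [mul_sum, ← sum_sub_distrib]
  exact sum_congr rfl fun j _ => by ring

theorem sum_mul_two_mul_sub_mul_mulVec [DecidableEq n] {σ A : Matrix n n R} {v : n → R}
    (hoff : ∀ i j, i ≠ j → A i j = σ i j)
    (hdiag : ∀ i, A i i = -∑ k ∈ univ.filter (fun k => k ≠ i), σ i k)
    (hv : Aᵀ *ᵥ v = 0) (x : n → R) (c : R) :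
    ∑ i, v i * (2 * (x i - c) * (A *ᵥ x) i) = -∑ i, ∑ j, v i * σ i j * (x i - x j) ^ 2 := by
  have hsq := dotProduct_mulVec_eq_zero_of_transpose_mulVec hv (fun j => (x j - c) ^ 2)
  simp only [dotProduct, mulVec_apply_eq_sum_mul_sub hoff hdiag] at hsq
  calc ∑ i, v i * (2 * (x i - c) * (A *ᵥ x) i)
      = ∑ i, v i * (∑ j, σ i j * ((x j - c) ^ 2 - (x i - c) ^ 2) -
          ∑ j, σ i j * (x i - x j) ^ 2) := by
        simp only [mulVec_apply_eq_sum_mul_sub hoff hdiag, two_mul_sub_mul_sum_mul_sub]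
    _ = ∑ i, v i * ∑ j, σ i j * ((x j - c) ^ 2 - (x i - c) ^ 2) -
          ∑ i, ∑ j, v i * σ i j * (x i - x j) ^ 2 := by
        rw [← sum_sub_distrib]
        exact sum_congr rfl fun i _ => by simp only [mul_sub, mul_sum, mul_assoc]
    _ = -∑ i, ∑ j, v i * σ i j * (x i - x j) ^ 2 := by rw [hsq, zero_sub]

end Generator

section Flow

variable {n : Type*} [Fintype n] {y y' : ℝ → n → ℝ}

theorem dotProduct_eq_of_hasDerivAt (v : n → ℝ) (hy : ∀ t, HasDerivAt y (y' t) t)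
    (hv : ∀ t, v ⬝ᵥ y' t = 0) (s t : ℝ) : v ⬝ᵥ y s = v ⬝ᵥ y t := by
  have hderiv : ∀ t, HasDerivAt (fun s => v ⬝ᵥ y s) (v ⬝ᵥ y' t) t := fun t =>
    HasDerivAt.fun_sum fun i _ => (hasDerivAt_pi.mp (hy t) i).const_mul (v i)
  exact is_const_of_deriv_eq_zero (fun t => (hderiv t).differentiableAt)
    (fun t => (hderiv t).deriv.trans (hv t)) s t

theorem hasDerivAt_sum_mul_sub_sq {x : n → ℝ} {t : ℝ} (v : n → ℝ) (c : ℝ)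
    (hy : HasDerivAt y x t) :
    HasDerivAt (fun s => ∑ i, v i * (y s i - c) ^ 2) (∑ i, v i * (2 * (y t i - c) * x i)) t := by
  refine HasDerivAt.fun_sum fun i _ => ?_
  refine ((((hasDerivAt_pi.mp hy i).sub_const c).fun_pow 2).const_mul (v i)).congr_deriv ?_
  norm_num

end Flow

theorem weighted_variance_derivative_general (N : ℕ) (σ A : Matrix (Fin N) (Fin N) ℝ)
    (hoff : ∀ i j, i ≠ j → A i j = σ i j)
    (hdiag : ∀ i, A i i = -∑ k ∈ Finset.univ.filter (fun k => k ≠ i), σ i k)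
    (v : Fin N → ℝ)
    (hv : Aᵀ.mulVec v = 0)
    (y : ℝ → Fin N → ℝ)
    (hy : ∀ t : ℝ, HasDerivAt y (A.mulVec (y t)) t)
    (m : ℝ) (hm : m = ∑ i, v i * y 0 i) :
    (∀ t : ℝ, ∑ i, v i * y t i = m) ∧
    (∀ t : ℝ, HasDerivAt (fun s => ∑ i, v i * (y s i - m) ^ 2)
      (-∑ i, ∑ j, v i * σ i j * (y t i - y t j) ^ 2) t) := by
  refine ⟨fun t => hm ▸ dotProduct_eq_of_hasDerivAt v hy
    (fun s => dotProduct_mulVec_eq_zero_of_transpose_mulVec hv (y s)) t 0, fun t => ?_⟩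
  rw [← sum_mul_two_mul_sub_mul_mulVec hoff hdiag hv (y t) m]
  exact hasDerivAt_sum_mul_sub_sq v m (hy t)

theorem weighted_variance_derivative (N : ℕ) (σ A : Matrix (Fin N) (Fin N) ℝ)
    (hσ : ∀ i j, i ≠ j → 0 ≤ σ i j)
    (hoff : ∀ i j, i ≠ j → A i j = σ i j)
    (hdiag : ∀ i, A i i = -∑ k ∈ Finset.univ.filter (fun k => k ≠ i), σ i k)
    (v : Fin N → ℝ) (hvpos : ∀ i, 0 < v i) (hvsum : ∑ i, v i = 1)
    (hv : Aᵀ.mulVec v = 0)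
    (y : ℝ → Fin N → ℝ)
    (hy : ∀ t : ℝ, HasDerivAt y (A.mulVec (y t)) t)
    (m : ℝ) (hm : m = ∑ i, v i * y 0 i) :
    (∀ t : ℝ, ∑ i, v i * y t i = m) ∧
    (∀ t : ℝ, HasDerivAt (fun s => ∑ i, v i * (y s i - m) ^ 2)
      (-∑ i, ∑ j, v i * σ i j * (y t i - y t j) ^ 2) t) :=
  weighted_variance_derivative_general N σ A hoff hdiag v hv y hy m hm
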